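/- Let ⟨𝒟_i : i ∈ ℕ⟩ be a sequence of open dense subsets of the tree Hechler poset ℍ. Let A ⊆ ℕ be infinite, and suppose that for each i ∈ ℕ (with S_i := {stem(T) : T ∈ 𝒟_i}), for every finite sequence t ∈ ℕ^{<ω} and every ordinal α, if the set B := {z ∈ ℕ : t⌢z is β-S_i-reachable for some β < α} is infinite, then B \ A is infinite. Then for every x : ℕ → ℕ there is a decreasing sequence T_0 ⊇ T_1 ⊇ ⋯ in ℍ with T_i ∈ 𝒟_i for every i, such that the union g of the stems of the T_i is a (total) function ℕ → ℕ, the set {n ∈ ℕ : g(n) ∈ A} is infinite, and x is the real A-encoded by g. -/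

import Mathlib

/-!
Density of `D` makes every node `stems D`-reachable: otherwise prune the reachable nodes from
the cone above it, and a condition of `D` below the pruned tree would have an unreachable stem.
Descending through the ranks of a reachable node, the help hypothesis lets each step pick a
successor outside `A` that the current condition still contains, so a stem of `D` is reached
without taking new values in `A`. Stage `i` therefore appends to the current stem one `a ∈ A`
whose index in `A` lies in `θ⁻¹(x i)`, descends outside `A` to the stem of some `T'' ∈ D i`,
and intersects `T''` with the current condition. The values in `A` of the limit `g` are then
exactly the appended `a`'s, in order.
-/

namespace GCH

/-! ### Turing reducibility -/

/-- `RecursiveIn O f` : the partial function `f : ℕ →. ℕ` is partial recursive relative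
to the oracle `O`.  This is the relativization of `Nat.Partrec`. -/
inductive RecursiveIn (O : ℕ →. ℕ) : (ℕ →. ℕ) → Prop
  | oracle : RecursiveIn O O
  | zero : RecursiveIn O (pure 0)
  | succ : RecursiveIn O ↑Nat.succ
  | left : RecursiveIn O ↑fun n : ℕ => n.unpair.1
  | right : RecursiveIn O ↑fun n : ℕ => n.unpair.2
  | pair {f g} : RecursiveIn O f → RecursiveIn O g →
      RecursiveIn O fun n => Nat.pair <$> f n <*> g n
  | comp {f g} : RecursiveIn O f → RecursiveIn O g →
      RecursiveIn O fun n => g n >>= f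
  | prec {f g} : RecursiveIn O f → RecursiveIn O g →
      RecursiveIn O (Nat.unpaired fun a n =>
        n.rec (f a) fun y IH => do let i ← IH; g (Nat.pair a (Nat.pair y i)))
  | rfind {f} : RecursiveIn O f →
      RecursiveIn O fun a => Nat.rfind fun n => (fun m => m = 0) <$> f (Nat.pair a n)

/-- Turing reducibility `f ≤_T g` for total functions `ℕ → ℕ`. -/
def TuringReducible (f g : ℕ → ℕ) : Prop :=
  RecursiveIn (g : ℕ →. ℕ) (f : ℕ →. ℕ)

/-- The Turing join `a ⊕ b` : `(a ⊕ b)(2n) = a(n)`, `(a ⊕ b)(2n+1) = b(n)`. -/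
def join (a b : ℕ → ℕ) : ℕ → ℕ := fun n =>
  if n % 2 = 0 then a (n / 2) else b (n / 2)

open Classical in
/-- The characteristic function of `A ⊆ ℕ`. -/
noncomputable def chi (A : Set ℕ) : ℕ → ℕ := fun n => if n ∈ A then 1 else 0

/-! ### The tree Hechler poset `ℍ` -/

/-- A condition in the tree Hechler poset `ℍ` : a nonempty tree `T ⊆ ℕ^{<ω}` closed under
initial segments, having a stem (the longest node comparable with every node of the tree),
such that every node extending the stem has cofinitely many immediate successors.
The order is inclusion of trees: `T' ≤ T` iff `T'.tree ⊆ T.tree`. -/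
structure Hechler where
  /-- the underlying set of finite sequences -/
  tree : Set (List ℕ)
  nonempty : tree.Nonempty
  /-- closed under initial segments -/
  closed : ∀ ⦃s t : List ℕ⦄, s <+: t → t ∈ tree → s ∈ tree
  /-- the stem -/
  stem : List ℕ
  stem_mem : stem ∈ tree
  /-- the stem is comparable with every node of the tree -/
  stem_comparable : ∀ t ∈ tree, stem <+: t ∨ t <+: stem
  /-- the stem is the longest node comparable with every node of the tree -/
  stem_longest : ∀ s ∈ tree, (∀ t ∈ tree, s <+: t ∨ t <+: s) → s.length ≤ stem.length
  /-- every node extending the stem has cofinitely many immediate successors -/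
  succ_cofinite : ∀ t ∈ tree, stem <+: t → {z : ℕ | t ++ [z] ∉ tree}.Finite

/-- `D ⊆ ℍ` is dense: every condition has a subset in `D`. -/
def HDense (D : Set Hechler) : Prop := ∀ T : Hechler, ∃ T' ∈ D, T'.tree ⊆ T.tree

/-- `D ⊆ ℍ` is open: any condition included in a member of `D` is in `D`. -/
def HOpen (D : Set Hechler) : Prop :=
  ∀ T T' : Hechler, T'.tree ⊆ T.tree → T ∈ D → T' ∈ D

/-- The set of stems of members of `D`. -/
def stems (D : Set Hechler) : Set (List ℕ) := {s | ∃ T ∈ D, T.stem = s}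

open Classical in
/-- `ReachAt S α t` : `t` is `α`-`S`-reachable.  `t` is `0`-`S`-reachable iff `t ∈ S`;
for `α > 0`, `t` is `α`-`S`-reachable iff infinitely many `z` are such that `t ⌢ z` is
`β`-`S`-reachable for some `β < α`. -/
noncomputable def ReachAt (S : Set (List ℕ)) (α : Ordinal.{0}) (t : List ℕ) : Prop :=
  if α = 0 then t ∈ S
  else {z : ℕ | ∃ β : Ordinal.{0}, ∃ _ : β < α, ReachAt S β (t ++ [z])}.Infinite
termination_by α

/-- `t` is `S`-reachable iff it is `α`-`S`-reachable for some ordinal `α`. -/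
def SReachable (S : Set (List ℕ)) (t : List ℕ) : Prop := ∃ α : Ordinal.{0}, ReachAt S α t

/-- `t' ⊒_A t` : `t'` extends `t` and takes no new value in `A`. -/
def ExtOutside (A : Set ℕ) (t t' : List ℕ) : Prop :=
  t <+: t' ∧ ∀ (k : ℕ) (h : k < t'.length), t.length ≤ k → t'.get ⟨k, h⟩ ∉ A

/-- The union of the stems of the `T i` is the total function `g : ℕ → ℕ`:
each stem is an initial segment of `g` and the stem lengths are unbounded. -/
def stemsUnion (T : ℕ → Hechler) (g : ℕ → ℕ) : Prop :=
  (∀ (i k : ℕ) (h : k < (T i).stem.length), (T i).stem.get ⟨k, h⟩ = g k) ∧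
    ∀ n : ℕ, ∃ i, n < (T i).stem.length

open Classical in
/-- The real `A`-encoded by `g` (relative to the fixed function `θ`):
its `i`-th value is `η_A(g(n_i))` where `n_0 < n_1 < ⋯` enumerates `{n | g n ∈ A}`
and `η_A = θ ∘ e_A⁻¹` with `e_A` the increasing enumeration of `A`. -/
noncomputable def encodedReal (θ : ℕ → ℕ) (A : Set ℕ) (g : ℕ → ℕ) : ℕ → ℕ :=
  fun i => θ (Nat.count (· ∈ A) (g (Nat.nth (fun n => g n ∈ A) i)))

section Lists

variable {α : Type*}

lemma getElem_eq_of_comparable_concat {s t : List α} {z : α} (hlt : t.length < s.length)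
    (hc : s <+: t ++ [z] ∨ t ++ [z] <+: s) : s[t.length] = z := by
  rcases hc with hc | hc
  · simp [hc.getElem hlt]
  · simp [← hc.getElem (by simp : t.length < (t ++ [z]).length)]

/-- If `s` has cofinitely many immediate successors in `tr`, a node comparable with all of `tr`
cannot extend `s` strictly: it would single out one successor. -/
lemma prefix_of_forall_comparable [Infinite α] {tr : Set (List α)} {s u : List α}
    (hs : {z | s ++ [z] ∉ tr}.Finite) (hu : ∀ t ∈ tr, u <+: t ∨ t <+: u)
    (hsu : s <+: u ∨ u <+: s) : u <+: s := by
  refine hsu.elim (fun hsu => ?_) id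
  by_contra hus
  have hlt : s.length < u.length :=
    hsu.length_le.lt_of_ne fun h => hus (hsu.eq_of_length h ▸ List.prefix_refl u)
  refine hs.infinite_compl ((Set.finite_singleton u[s.length]).subset fun z hz => ?_)
  exact (getElem_eq_of_comparable_concat hlt (hu _ (not_not.mp hz))).symm

lemma exists_forall_getElem_eq_of_prefix_chain {u : ℕ → List α}
    (hchain : ∀ i, u i <+: u (i + 1)) (hlen : ∀ n, ∃ i, n < (u i).length) :
    ∃ g : ℕ → α, ∀ i k (hk : k < (u i).length), (u i)[k] = g k := by
  choose j hj using hlen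
  have hmono : ∀ ⦃a b⦄, a ≤ b → u a <+: u b := fun a b hab =>
    Nat.le_induction (List.prefix_refl _) (fun n _ ih => ih.trans (hchain n)) b hab
  refine ⟨fun k => (u (j k))[k]'(hj k), fun i k hk => ?_⟩
  rcases le_total i (j k) with h | h
  · exact (hmono h).getElem hk
  · exact ((hmono h).getElem (hj k)).symm

end Lists

lemma nth_eq_of_strictMono_of_gaps {P : ℕ → Prop} {p : ℕ → ℕ} (hp : StrictMono p)
    (hmem : ∀ i, P (p i)) (hbelow : ∀ n < p 0, ¬ P n)
    (hgap : ∀ i n, p i < n → n < p (i + 1) → ¬ P n) : Nat.nth P = p := by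
  have hsurj : ∀ n, P n → n ∈ Set.range p := by
    intro n hn
    by_contra hnp
    have h0 : p 0 < n := (not_lt.mp fun h => hbelow n h hn).lt_of_ne fun h => hnp ⟨0, h⟩
    obtain ⟨i, hi, hi'⟩ := hp.exists_between_of_tendsto_atTop hp.tendsto_atTop h0
    exact hgap i n hi (hi'.lt_of_ne fun h => hnp ⟨i + 1, h.symm⟩) hn
  have hinf : (Set.ofPred P).Infinite :=
    (Set.infinite_range_of_injective hp.injective).mono (Set.range_subset_iff.2 hmem)
  have hall : ∀ n, ∀ hf : (Set.ofPred P).Finite, n < hf.toFinset.card := fun _ hf => absurd hf hinf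
  funext i
  refine (Nat.eq_nth_of_strictMonoOn_of_mapsTo_of_surjOn p (fun n hn => ?_)
    (fun i _ => hmem i) (hp.strictMonoOn _) (hall i)).symm
  obtain ⟨i, rfl⟩ := hsurj n hn
  exact ⟨i, hall i, rfl⟩

section ExtOutside

variable {A : Set ℕ}

lemma extOutside_refl (A : Set ℕ) (t : List ℕ) : ExtOutside A t t :=
  ⟨List.prefix_refl t, fun _ h hk => absurd h (by omega)⟩

lemma extOutside_trans {t₁ t₂ t₃ : List ℕ} (h₁ : ExtOutside A t₁ t₂)
    (h₂ : ExtOutside A t₂ t₃) : ExtOutside A t₁ t₃ := by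
  refine ⟨h₁.1.trans h₂.1, fun k hk hk₁ => ?_⟩
  by_cases hk₂ : k < t₂.length
  · simpa [← h₂.1.getElem hk₂] using h₁.2 k hk₂ hk₁
  · exact h₂.2 k hk (by omega)

lemma extOutside_concat (t : List ℕ) {z : ℕ} (hz : z ∉ A) : ExtOutside A t (t ++ [z]) :=
  ⟨List.prefix_append t [z], fun k hk hk' => by
    obtain rfl : k = t.length := by
      simp only [List.length_append, List.length_singleton] at hk
      omega
    simpa using hz⟩

end ExtOutside

namespace Hechler

/-- The field `stem_longest` follows from `succ_cofinite` at the stem. -/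
def mk' (tree : Set (List ℕ)) (closed : ∀ ⦃s t : List ℕ⦄, s <+: t → t ∈ tree → s ∈ tree)
    (stem : List ℕ) (stem_mem : stem ∈ tree)
    (stem_comparable : ∀ t ∈ tree, stem <+: t ∨ t <+: stem)
    (succ_cofinite : ∀ t ∈ tree, stem <+: t → {z : ℕ | t ++ [z] ∉ tree}.Finite) : Hechler where
  tree := tree
  nonempty := ⟨stem, stem_mem⟩
  closed := closed
  stem := stem
  stem_mem := stem_mem
  stem_comparable := stem_comparable
  stem_longest s hs hcomp :=
    (prefix_of_forall_comparable (succ_cofinite stem stem_mem (List.prefix_refl _)) hcomp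
      (stem_comparable s hs)).length_le
  succ_cofinite := succ_cofinite

lemma stem_prefix_of_subset {T T' : Hechler} (h : T'.tree ⊆ T.tree) : T.stem <+: T'.stem :=
  prefix_of_forall_comparable (T'.succ_cofinite _ T'.stem_mem (List.prefix_refl _))
    (fun t ht => T.stem_comparable t (h ht)) (T.stem_comparable _ (h T'.stem_mem)).symm

def cone (t : List ℕ) : Hechler :=
  mk' {u | u <+: t ∨ t <+: u}
    (fun s u hsu hu => hu.elim (fun hut => Or.inl (hsu.trans hut))
      (fun htu => List.prefix_or_prefix_of_prefix hsu htu))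
    t (Or.inl (List.prefix_refl t)) (fun _ hu => hu.symm)
    (fun u _ htu => by simp [htu.trans (List.prefix_append u _)])

def inter (T₁ T₂ : Hechler) (hstem : T₁.stem <+: T₂.stem) (hmem : T₂.stem ∈ T₁.tree) :
    Hechler :=
  mk' (T₁.tree ∩ T₂.tree) (fun _ _ hsu hu => ⟨T₁.closed hsu hu.1, T₂.closed hsu hu.2⟩)
    T₂.stem ⟨hmem, T₂.stem_mem⟩ (fun u hu => T₂.stem_comparable u hu.2)
    (fun u hu htu => ((T₁.succ_cofinite u hu.1 (hstem.trans htu)).union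
      (T₂.succ_cofinite u hu.2 htu)).subset fun z hz => by
        simp only [Set.mem_inter_iff, not_and_or] at hz
        exact hz)

lemma inter_subset_left (T₁ T₂ : Hechler) (hstem : T₁.stem <+: T₂.stem)
    (hmem : T₂.stem ∈ T₁.tree) : (inter T₁ T₂ hstem hmem).tree ⊆ T₁.tree :=
  Set.inter_subset_left

lemma inter_subset_right (T₁ T₂ : Hechler) (hstem : T₁.stem <+: T₂.stem)
    (hmem : T₂.stem ∈ T₁.tree) : (inter T₁ T₂ hstem hmem).tree ⊆ T₂.tree :=
  Set.inter_subset_right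

def avoid (T : Hechler) (B : Set (List ℕ)) (hstem : T.stem ∉ B)
    (hB : ∀ u ∉ B, {z : ℕ | u ++ [z] ∈ B}.Finite) : Hechler :=
  mk' {u ∈ T.tree | ∀ v, T.stem <+: v → v <+: u → v ∉ B}
    (fun s u hsu hu => ⟨T.closed hsu hu.1, fun v hv hvs => hu.2 v hv (hvs.trans hsu)⟩)
    T.stem ⟨T.stem_mem, fun v hv hvs => hv.eq_of_length (le_antisymm hv.length_le
      hvs.length_le) ▸ hstem⟩
    (fun u hu => T.stem_comparable u hu.1)
    (fun u hu hsu => ((T.succ_cofinite u hu.1 hsu).union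
      (hB u (hu.2 u hsu (List.prefix_refl u)))).subset fun z hz => by
        by_contra hzB
        simp only [Set.mem_union, Set.mem_ofPred_eq, not_or, not_not] at hzB
        refine hz ⟨hzB.1, fun v hv hvu => ?_⟩
        rcases List.prefix_concat_iff.mp hvu with rfl | hvu
        exacts [hzB.2, hu.2 v hv hvu])

lemma not_mem_of_mem_avoid {T : Hechler} {B : Set (List ℕ)} {hstem : T.stem ∉ B}
    {hB : ∀ u ∉ B, {z : ℕ | u ++ [z] ∈ B}.Finite} {u : List ℕ}
    (hu : u ∈ (avoid T B hstem hB).tree) (hsu : T.stem <+: u) : u ∉ B :=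
  hu.2 u hsu (List.prefix_refl u)

end Hechler

section Reachability

variable {S : Set (List ℕ)}

/-- The set `B` of the help hypothesis. -/
def reachSuccs (S : Set (List ℕ)) (α : Ordinal.{0}) (t : List ℕ) : Set ℕ :=
  {z | ∃ β : Ordinal.{0}, ∃ _ : β < α, ReachAt S β (t ++ [z])}

lemma reachAt_zero {t : List ℕ} : ReachAt S 0 t ↔ t ∈ S := by
  rw [ReachAt]; simp

lemma reachAt_iff_of_ne_zero {α : Ordinal.{0}} (hα : α ≠ 0) {t : List ℕ} :
    ReachAt S α t ↔ (reachSuccs S α t).Infinite := by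
  rw [ReachAt]; simp [hα, reachSuccs]

/-- Above infinitely many reachable successors sits the successor of the supremum of their
ranks. -/
lemma finite_setOf_sReachable_append {t : List ℕ} (h : ¬ SReachable S t) :
    {z : ℕ | SReachable S (t ++ [z])}.Finite := by
  refine Set.not_infinite.mp fun hinf => ?_
  choose r hr using fun z : {z : ℕ | SReachable S (t ++ [z])} => z.2
  refine h ⟨Order.succ (⨆ z, r z), (reachAt_iff_of_ne_zero (Order.lt_succ _).ne_bot).2 ?_⟩
  exact hinf.mono fun z hz =>
    ⟨r ⟨z, hz⟩, (Ordinal.le_iSup r _).trans_lt (Order.lt_succ _), hr _⟩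

lemma sReachable_stems_of_dense {D : Set Hechler} (hd : HDense D) (t : List ℕ) :
    SReachable (stems D) t := by
  by_contra h
  obtain ⟨T, hTD, hT⟩ := hd ((Hechler.cone t).avoid {v | SReachable (stems D) v} h
    fun _ hu => finite_setOf_sReachable_append hu)
  have hstem := Hechler.stem_prefix_of_subset hT
  exact Hechler.not_mem_of_mem_avoid (hT T.stem_mem) hstem ⟨0, reachAt_zero.2 ⟨T, hTD, rfl⟩⟩

lemma exists_mem_extOutside_of_reachAt {A : Set ℕ}
    (hS : ∀ t α, (reachSuccs S α t).Infinite → (reachSuccs S α t \ A).Infinite)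
    {T : Hechler} (α : Ordinal.{0}) {t : List ℕ} (hα : ReachAt S α t) (ht : t ∈ T.tree)
    (hst : T.stem <+: t) : ∃ t' ∈ S, t' ∈ T.tree ∧ ExtOutside A t t' := by
  induction α using WellFoundedLT.induction generalizing t with
  | ind α IH =>
    rcases eq_or_ne α 0 with rfl | hα0
    · exact ⟨t, reachAt_zero.1 hα, ht, extOutside_refl A t⟩
    obtain ⟨z, ⟨⟨β, hβ, hz⟩, hzA⟩, hzT⟩ :=
      ((hS t α ((reachAt_iff_of_ne_zero hα0).1 hα)).sdiff (T.succ_cofinite t ht hst)).nonempty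
    obtain ⟨t', ht'S, ht'T, hext⟩ :=
      IH β hβ hz (not_not.mp hzT) (hst.trans (List.prefix_append t [z]))
    exact ⟨t', ht'S, ht'T, extOutside_trans (extOutside_concat t hzA) hext⟩

end Reachability

open Classical in
lemma infinite_setOf_mem_and_count_mem {A K : Set ℕ} (hA : A.Infinite) (hK : K.Infinite) :
    {a | a ∈ A ∧ Nat.count (· ∈ A) a ∈ K}.Infinite := by
  have hA' : (Set.ofPred (· ∈ A)).Infinite := hA
  refine (hK.image (Nat.nth_injective hA').injOn).mono ?_
  rintro _ ⟨k, hk, rfl⟩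
  exact ⟨Nat.nth_mem_of_infinite hA' k, by rwa [Nat.count_nth_of_infinite hA']⟩

open Classical in
lemma exists_step {θ : ℕ → ℕ} (hθ : ∀ m : ℕ, {k : ℕ | θ k = m}.Infinite) {D : Set Hechler}
    (hopen : HOpen D) (hdense : HDense D) {A : Set ℕ} (hA : A.Infinite)
    (hS : ∀ t α, (reachSuccs (stems D) α t).Infinite → (reachSuccs (stems D) α t \ A).Infinite)
    (m : ℕ) (T : Hechler) :
    ∃ (T' : Hechler) (a : ℕ), T' ∈ D ∧ T'.tree ⊆ T.tree ∧ a ∈ A ∧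
      θ (Nat.count (· ∈ A) a) = m ∧ ExtOutside A (T.stem ++ [a]) T'.stem := by
  obtain ⟨a, ⟨haA, haθ⟩, haT⟩ := ((infinite_setOf_mem_and_count_mem hA (hθ m)).sdiff
    (T.succ_cofinite _ T.stem_mem (List.prefix_refl _))).nonempty
  obtain ⟨α, hα⟩ := sReachable_stems_of_dense hdense (T.stem ++ [a])
  obtain ⟨_, ⟨T'', hT''D, rfl⟩, hT''T, hext⟩ :=
    exists_mem_extOutside_of_reachAt hS α hα (not_not.mp haT) (List.prefix_append _ _)
  have hstem : T.stem <+: T''.stem := (List.prefix_append _ _).trans hext.1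
  exact ⟨T.inter T'' hstem hT''T, a, hopen _ _ (Hechler.inter_subset_right ..) hT''D,
    Hechler.inter_subset_left .., haA, haθ, hext⟩

lemma exists_limit_of_extOutside {A : Set ℕ} (u : ℕ → List ℕ) (b : ℕ → ℕ) (hu0 : u 0 = [])
    (hb : ∀ i, b i ∈ A) (hu : ∀ i, ExtOutside A (u i ++ [b i]) (u (i + 1))) :
    ∃ g : ℕ → ℕ, (∀ i k (hk : k < (u i).length), (u i)[k] = g k) ∧
      (∀ n, n < (u (n + 1)).length) ∧ {n | g n ∈ A}.Infinite ∧
      Nat.nth (fun n => g n ∈ A) = (fun i => (u i).length) ∧ ∀ i, g (u i).length = b i := by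
  have hlen : ∀ i, (u i).length < (u (i + 1)).length := fun i => by
    simpa using (hu i).1.length_le
  have hp : StrictMono fun i => (u i).length := strictMono_nat_of_lt_succ hlen
  have hgt : ∀ n, n < (u (n + 1)).length := fun n => (hp.id_le n).trans_lt (hlen n)
  obtain ⟨g, hg⟩ := exists_forall_getElem_eq_of_prefix_chain
    (fun i => (List.prefix_append _ _).trans (hu i).1) fun n => ⟨n + 1, hgt n⟩
  have hgb : ∀ i, g (u i).length = b i := fun i => by
    rw [← hg (i + 1) _ (hlen i), ← (hu i).1.getElem (by simp)]
    simp
  have hmem : ∀ i, g (u i).length ∈ A := fun i => hgb i ▸ hb i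
  refine ⟨g, hg, hgt, (Set.infinite_range_of_injective hp.injective).mono
    (Set.range_subset_iff.2 hmem), nth_eq_of_strictMono_of_gaps hp hmem (by simp [hu0])
    fun i n hin hni => ?_, hgb⟩
  rw [← hg (i + 1) n hni]
  simpa using (hu i).2 n hni (by simpa using hin)

theorem generic_coding_with_help_encoded_general
    (θ : ℕ → ℕ) (hθfib : ∀ m : ℕ, {k : ℕ | θ k = m}.Infinite)
    (D : ℕ → Set Hechler)
    (hDopen : ∀ i, HOpen (D i)) (hDdense : ∀ i, HDense (D i))
    (A : Set ℕ) (hA : A.Infinite)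
    (hstick : ∀ (i : ℕ) (t : List ℕ) (α : Ordinal.{0}),
      {z : ℕ | ∃ β : Ordinal.{0}, ∃ _ : β < α,
        ReachAt (stems (D i)) β (t ++ [z])}.Infinite →
      ({z : ℕ | ∃ β : Ordinal.{0}, ∃ _ : β < α,
        ReachAt (stems (D i)) β (t ++ [z])} \ A).Infinite)
    (x : ℕ → ℕ) :
    ∃ T : ℕ → Hechler,
      (∀ i, (T (i + 1)).tree ⊆ (T i).tree) ∧
      (∀ i, T i ∈ D i) ∧
      ∃ g : ℕ → ℕ, stemsUnion T g ∧
        {n : ℕ | g n ∈ A}.Infinite ∧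
        encodedReal θ A g = x := by
  choose F b hFD hFsub hbA hbθ hFext using fun i T =>
    exists_step hθfib (hDopen i) (hDdense i) hA (hstick i) (x i) T
  let C : ℕ → Hechler := fun i => Nat.rec (Hechler.cone []) F i
  obtain ⟨g, hg, hlen, hinf, hnth, hgb⟩ := exists_limit_of_extOutside (fun i => (C i).stem)
    (fun i => b i (C i)) rfl (fun i => hbA i (C i)) fun i => hFext i (C i)
  refine ⟨fun i => C (i + 1), fun i => hFsub (i + 1) (C (i + 1)), fun i => hFD i (C i), g,
    ⟨fun i k hk => hg (i + 1) k hk, fun n => ⟨n, hlen n⟩⟩, hinf, funext fun i => ?_⟩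
  simp only [encodedReal, hnth, hgb]
  exact hbθ i (C i)

/-- **Generic Coding with Help**, encoding form. -/
theorem generic_coding_with_help_encoded
    (θ : ℕ → ℕ) (hθ : Computable θ) (hθfib : ∀ m : ℕ, {k : ℕ | θ k = m}.Infinite)
    (D : ℕ → Set Hechler)
    (hDopen : ∀ i, HOpen (D i)) (hDdense : ∀ i, HDense (D i))
    (A : Set ℕ) (hA : A.Infinite)
    (hstick : ∀ (i : ℕ) (t : List ℕ) (α : Ordinal.{0}),
      {z : ℕ | ∃ β : Ordinal.{0}, ∃ _ : β < α,
        ReachAt (stems (D i)) β (t ++ [z])}.Infinite →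
      ({z : ℕ | ∃ β : Ordinal.{0}, ∃ _ : β < α,
        ReachAt (stems (D i)) β (t ++ [z])} \ A).Infinite)
    (x : ℕ → ℕ) :
    ∃ T : ℕ → Hechler,
      (∀ i, (T (i + 1)).tree ⊆ (T i).tree) ∧
      (∀ i, T i ∈ D i) ∧
      ∃ g : ℕ → ℕ, stemsUnion T g ∧
        {n : ℕ | g n ∈ A}.Infinite ∧
        encodedReal θ A g = x :=
  generic_coding_with_help_encoded_general θ hθfib D hDopen hDdense A hA hstick x

end GCH
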